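/- arXiv:1310.6205 — 2 statements merged into one kernel-verified Lean document; each statement's English description precedes it below -/
import Mathlib

section
/- Let G be a finite graph and k ≥ 1 an integer such that every induced subgraph of G admits a semicoloring with at most k colors. Then χ(G) ≤ k^{ω(G)}. -/
/-- The bull graph: a triangle `x₁ = 0`, `x₂ = 1`, `x₃ = 2` together with two horns
`y = 3` (adjacent to `x₁`) and `z = 4` (adjacent to `x₂`). -/
def bullGraph : SimpleGraph (Fin 5) :=
  SimpleGraph.fromEdgeSet {s(0, 1), s(0, 2), s(1, 2), s(0, 3), s(1, 4)}

/-- A graph is bull-free if it has no induced subgraph isomorphic to the bull. -/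
def BullFree {V : Type*} (G : SimpleGraph V) : Prop :=
  ∀ f : Fin 5 → V, ¬ (Function.Injective f ∧ ∀ u v, bullGraph.Adj u v ↔ G.Adj (f u) (f v))

/-- The chromatic number of `G` (as a natural number). -/
noncomputable def chromNum {V : Type*} (G : SimpleGraph V) : ℕ :=
  sInf {n | G.Colorable n}

/-- The clique number of `G`. -/
noncomputable def cliqueNum {V : Type*} (G : SimpleGraph V) : ℕ :=
  sSup {n | ∃ s : Finset V, G.IsNClique n s}

/-- The independence number of `G`. -/
noncomputable def indepNum {V : Type*} (G : SimpleGraph V) : ℕ :=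
  sSup {n | ∃ s : Finset V, Gᶜ.IsNClique n s}

/-- The triangle-free chromatic number of `G`: the maximum chromatic number of a
triangle-free induced subgraph of `G`. -/
noncomputable def chiT {V : Type*} (G : SimpleGraph V) : ℕ :=
  sSup {m | ∃ S : Set V, (G.induce S).CliqueFree 3 ∧ m = chromNum (G.induce S)}

/-- `G` contains an odd hole: an induced cycle of odd length at least 5. -/
def HasOddHole {V : Type*} (G : SimpleGraph V) : Prop :=
  ∃ k : ℕ, 5 ≤ k ∧ Odd k ∧ ∃ f : Fin k → V, Function.Injective f ∧
    ∀ i j : Fin k, G.Adj (f i) (f j) ↔ ((i.val + 1) % k = j.val ∨ (j.val + 1) % k = i.val)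

/-- A semicoloring of `G`: no inclusion-maximal clique with at least two vertices is
monochromatic. -/
def IsSemicoloring {V : Type*} (G : SimpleGraph V) {N : ℕ} (c : V → Fin N) : Prop :=
  ∀ K : Finset V, G.IsClique ↑K →
    (∀ K' : Finset V, G.IsClique ↑K' → K ⊆ K' → K = K') →
    2 ≤ K.card → ∃ u ∈ K, ∃ v ∈ K, c u ≠ c v

/-- The Ramsey number `R(s, t)`: the least `n` such that every graph on `n` vertices has a
clique of size `s` or an independent set of size `t`. -/
noncomputable def ramsey (s t : ℕ) : ℕ :=
  sInf {n | ∀ G : SimpleGraph (Fin n),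
    (∃ K : Finset (Fin n), G.IsNClique s K) ∨ (∃ I : Finset (Fin n), Gᶜ.IsNClique t I)}

section Aux

private lemma cliqueSet_bddAbove {V : Type*} [Fintype V] (G : SimpleGraph V) :
    BddAbove {n | ∃ s : Finset V, G.IsNClique n s} := by
  refine ⟨Fintype.card V, ?_⟩
  rintro n ⟨s, hs⟩
  rw [← hs.2]
  exact Finset.card_le_univ s

private lemma card_le_cliqueNum' {V : Type*} [Fintype V] {G : SimpleGraph V}
    {n : ℕ} {s : Finset V} (hs : G.IsNClique n s) : n ≤ cliqueNum G :=
  le_csSup (cliqueSet_bddAbove G) ⟨s, hs⟩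

private lemma cliqueNum_le' {V : Type*} [Fintype V] {G : SimpleGraph V} {n : ℕ}
    (h : ∀ m : ℕ, ∀ s : Finset V, G.IsNClique m s → m ≤ n) : cliqueNum G ≤ n :=
  csSup_le ⟨0, ∅, by simp⟩ (by rintro m ⟨s, hs⟩; exact h m s hs)

private lemma colorable_one {V : Type*} [Fintype V] {G : SimpleGraph V}
    (h : cliqueNum G ≤ 1) : G.Colorable 1 := by
  classical
  refine ⟨SimpleGraph.Coloring.mk (fun _ => 0) ?_⟩
  intro u v huv hc
  have h2 : G.IsNClique 2 ({u, v} : Finset V) := by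
    constructor
    · intro a ha b hb hab
      simp only [Finset.coe_insert, Finset.coe_singleton, Set.mem_insert_iff,
        Set.mem_singleton_iff] at ha hb
      rcases ha with rfl | rfl <;> rcases hb with rfl | rfl <;>
        first | exact absurd rfl hab | exact huv | exact huv.symm
    · rw [Finset.card_insert_of_notMem (by simp [huv.ne]), Finset.card_singleton]
  have := card_le_cliqueNum' h2
  omega

private lemma aux {V : Type} [Fintype V] (G : SimpleGraph V) (k : ℕ) (hk : 1 ≤ k)
    (h : ∀ S : Set V, ∃ c : S → Fin k, IsSemicoloring (G.induce S) c) :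
    ∀ n : ℕ, ∀ S : Set V, cliqueNum (G.induce S) ≤ n → (G.induce S).Colorable (k ^ n) := by
  intro n
  induction n with
  | zero =>
    intro S hS
    haveI : Fintype ↥S := Set.Finite.fintype S.toFinite
    simpa using colorable_one (hS.trans zero_le_one)
  | succ n ih =>
    intro S hS
    haveI : Fintype ↥S := Set.Finite.fintype S.toFinite
    by_cases h1 : cliqueNum (G.induce S) ≤ 1
    · exact (colorable_one h1).mono (Nat.one_le_pow _ _ hk)
    push_neg at h1
    obtain ⟨c, hc⟩ := h S
    set T : Fin k → Set V := fun i => {v | ∃ hv : v ∈ S, c ⟨v, hv⟩ = i} with hT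
    have hTS : ∀ i, T i ⊆ S := by rintro i v ⟨hv, _⟩; exact hv
    have hcT : ∀ i (v : ↥S), v.1 ∈ T i → c v = i := by
      rintro i ⟨v, hv⟩ ⟨hv', hci⟩
      exact hci
    have hclT : ∀ i, cliqueNum (G.induce (T i)) ≤ n := by
      intro i
      haveI : Fintype ↥(T i) := Set.Finite.fintype (T i).toFinite
      apply cliqueNum_le'
      intro m s hs
      set e : ↥(T i) ↪ ↥S := ⟨Set.inclusion (hTS i), Set.inclusion_injective (hTS i)⟩ with he
      set s' : Finset ↥S := s.map e with hs'
      have hmem : ∀ w : ↥S, w ∈ s' → w.1 ∈ T i := by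
        intro w hw
        rw [hs', Finset.mem_map] at hw
        obtain ⟨a, _, rfl⟩ := hw
        exact a.2
      have hclique : (G.induce S).IsClique ↑s' := by
        intro a ha b hb hab
        simp only [hs', Finset.coe_map, Set.mem_image, Finset.mem_coe] at ha hb
        obtain ⟨a', ha', rfl⟩ := ha
        obtain ⟨b', hb', rfl⟩ := hb
        have hab' : a' ≠ b' := fun hh => hab (by rw [hh])
        have := hs.1 (Finset.mem_coe.mpr ha') (Finset.mem_coe.mpr hb') hab'
        exact this
      have hns' : (G.induce S).IsNClique m s' := ⟨hclique, by rw [hs', Finset.card_map, hs.2]⟩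
      have hmle : m ≤ n + 1 := (card_le_cliqueNum' hns').trans hS
      by_contra hmn
      push_neg at hmn
      have hm : m = n + 1 := by omega
      have hm2 : 2 ≤ m := by omega
      have hmax : ∀ K' : Finset ↥S, (G.induce S).IsClique ↑K' → s' ⊆ K' → s' = K' := by
        intro K' hK' hsub
        have hcard : K'.card ≤ n + 1 := (card_le_cliqueNum' ⟨hK', rfl⟩).trans hS
        exact (Finset.eq_of_subset_of_card_le hsub (by rw [hns'.2, hm] at *; omega)).symm.symm
      obtain ⟨u, hu, v, hv, huv⟩ := hc s' hclique hmax (by rw [hns'.2]; omega)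
      exact huv ((hcT i u (hmem u hu)).trans (hcT i v (hmem v hv)).symm)
    let col : ∀ i, (G.induce (T i)).Coloring (Fin (k ^ n)) := fun i => (ih (T i) (hclT i)).some
    have key : ∀ (i j : Fin k) (hij : i = j) (x : ↥(T i)),
        col i x = col j ⟨x.1, hij ▸ x.2⟩ := by
      rintro i j rfl x; rfl
    have hcol2 : (G.induce S).Colorable (k * k ^ n) := by
      have C : (G.induce S).Coloring (Fin k × Fin (k ^ n)) := by
        refine SimpleGraph.Coloring.mk (fun v => (c v, col (c v) ⟨v.1, v.2, rfl⟩)) ?_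
        intro u v huv hcc
        have h1 : c u = c v := congrArg Prod.fst hcc
        have h2 : col (c u) ⟨u.1, u.2, rfl⟩ = col (c v) ⟨v.1, v.2, rfl⟩ :=
          congrArg Prod.snd hcc
        rw [key (c u) (c v) h1 ⟨u.1, u.2, rfl⟩] at h2
        have hu' : u.1 ∈ T (c v) := ⟨u.2, h1⟩
        have hv' : v.1 ∈ T (c v) := ⟨v.2, rfl⟩
        have hadj : (G.induce (T (c v))).Adj ⟨u.1, hu'⟩ ⟨v.1, hv'⟩ := huv
        exact (col (c v)).valid hadj h2
      simpa using C.colorable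
    exact hcol2.mono (by rw [pow_succ, mul_comm])

end Aux

/-- If `k ≥ 1` and every induced subgraph of a finite graph `G` admits a semicoloring with
at most `k` colors, then `χ(G) ≤ k ^ ω(G)`. -/
theorem chromNum_le_pow_of_semicoloring {V : Type} [Fintype V] (G : SimpleGraph V)
    (k : ℕ) (hk : 1 ≤ k)
    (h : ∀ S : Set V, ∃ c : S → Fin k, IsSemicoloring (G.induce S) c) :
    chromNum G ≤ k ^ cliqueNum G := by
  have hcl : cliqueNum (G.induce (Set.univ : Set V)) ≤ cliqueNum G := by
    haveI : Fintype ↥(Set.univ : Set V) := Set.Finite.fintype (Set.toFinite _)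
    apply cliqueNum_le'
    intro m s hs
    refine card_le_cliqueNum' (s := s.map ⟨Subtype.val, Subtype.val_injective⟩) ⟨?_, ?_⟩
    · intro a ha b hb hab
      simp only [Finset.coe_map, Set.mem_image, Finset.mem_coe,
        Function.Embedding.coeFn_mk] at ha hb
      obtain ⟨a', ha', rfl⟩ := ha
      obtain ⟨b', hb', rfl⟩ := hb
      have hab' : a' ≠ b' := fun hh => hab (by rw [hh])
      exact hs.1 (Finset.mem_coe.mpr ha') (Finset.mem_coe.mpr hb') hab'
    · rw [Finset.card_map, hs.2]
  obtain ⟨C⟩ := aux G k hk h (cliqueNum G) Set.univ hcl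
  have CG : G.Coloring (Fin (k ^ cliqueNum G)) :=
    SimpleGraph.Coloring.mk (fun v => C ⟨v, trivial⟩)
      (fun {u v} hadj => C.valid (by exact hadj))
  exact Nat.sInf_le ⟨CG⟩
end

section
/- If (X,Y) is a decomposition of a bull-free monogamous trigraph T, then the corresponding blocks T_X and T_Y are bull-free monogamous trigraphs. -/
/-!
Every vertex of a block other than its two markers is a vertex of `T`, and each marker can be
replaced by a vertex of `T` with the same neighbours in the block: a vertex of `A` or `B` for
`T_Y`, of `C` or `D` for `T_X`. This turns a bull of a block into a bull of `T`, provided that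
when the bull contains both markers, their replacements are joined as the bull requires (the
markers themselves form a switchable pair, so the bull may use it as an edge or as an antiedge).
In `T_Y` we can choose `a ∈ A` and `b ∈ B` joined either way, since `A` is neither strongly
complete nor strongly anticomplete to `B`. In `T_X` no bull contains both markers: every vertex
of `A ∪ B` sees exactly one of them, while any two vertices of a bull are joined alike to one of
the other three. Monogamy is clear, as the only switchable pair at a marker is the pair of
markers.
-/

structure Trigraph (V : Type*) where
  θ : V → V → ℤ
  symm : ∀ u v, θ u v = θ v u
  range : ∀ u v, u ≠ v → θ u v = -1 ∨ θ u v = 0 ∨ θ u v = 1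

namespace Trigraph

variable {V : Type*}

/-- `u` and `v` form a strong edge. -/
def SEdge (T : Trigraph V) (u v : V) : Prop := u ≠ v ∧ T.θ u v = 1

/-- `u` and `v` form a strong antiedge. -/
def SAnti (T : Trigraph V) (u v : V) : Prop := u ≠ v ∧ T.θ u v = -1

/-- `u` and `v` form a switchable pair. -/
def Switch (T : Trigraph V) (u v : V) : Prop := u ≠ v ∧ T.θ u v = 0

/-- `u` and `v` are adjacent. -/
def Adj (T : Trigraph V) (u v : V) : Prop := u ≠ v ∧ (T.θ u v = 0 ∨ T.θ u v = 1)

/-- `u` and `v` are antiadjacent. -/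
def Anti (T : Trigraph V) (u v : V) : Prop := u ≠ v ∧ (T.θ u v = -1 ∨ T.θ u v = 0)

instance [DecidableEq V] (T : Trigraph V) (u v : V) : Decidable (T.Adj u v) :=
  inferInstanceAs (Decidable (u ≠ v ∧ (T.θ u v = 0 ∨ T.θ u v = 1)))

instance [DecidableEq V] (T : Trigraph V) (u v : V) : Decidable (T.Anti u v) :=
  inferInstanceAs (Decidable (u ≠ v ∧ (T.θ u v = -1 ∨ T.θ u v = 0)))

instance [DecidableEq V] (T : Trigraph V) (u v : V) : Decidable (T.Switch u v) :=
  inferInstanceAs (Decidable (u ≠ v ∧ T.θ u v = 0))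

instance [DecidableEq V] (T : Trigraph V) (u v : V) : Decidable (T.SAnti u v) :=
  inferInstanceAs (Decidable (u ≠ v ∧ T.θ u v = -1))

/-- A trigraph is monogamous if every vertex is in at most one switchable pair. -/
def Monogamous (T : Trigraph V) : Prop :=
  ∀ v u w : V, T.Switch v u → T.Switch v w → u = w

/-- The complement trigraph. -/
def compl (T : Trigraph V) : Trigraph V where
  θ := fun u v => -(T.θ u v)
  symm := fun u v => congrArg Neg.neg (T.symm u v)
  range := fun u v h => by
    have := T.range u v h
    try dsimp only
    omega

def IsBull (T : Trigraph V) (x1 x2 x3 y z : V) : Prop :=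
  T.Adj x1 x2 ∧ T.Adj x1 x3 ∧ T.Adj x2 x3 ∧
  T.Adj y x1 ∧ T.Anti y x2 ∧ T.Anti y x3 ∧ T.Anti y z ∧
  T.Adj z x2 ∧ T.Anti z x1 ∧ T.Anti z x3

def BullFree (T : Trigraph V) : Prop := ∀ x1 x2 x3 y z : V, ¬ T.IsBull x1 x2 x3 y z

/-- `S` is strongly complete to `A`. -/
def SComplete (T : Trigraph V) (S A : Set V) : Prop := ∀ s ∈ S, ∀ a ∈ A, T.SEdge s a

/-- `S` is strongly anticomplete to `A`. -/
def SAnticomplete (T : Trigraph V) (S A : Set V) : Prop := ∀ s ∈ S, ∀ a ∈ A, T.SAnti s a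

/-- A homogeneous set. -/
def HomSet (T : Trigraph V) (X : Set V) : Prop :=
  1 < X.ncard ∧ X.ncard < Nat.card V ∧
  ∀ v ∉ X, (∀ a ∈ X, T.SEdge v a) ∨ (∀ a ∈ X, T.SAnti v a)

/-- `(A,B,C,D,E,F)` is a split of the homogeneous pair `(A,B)`. -/
def IsSplit (T : Trigraph V) (A B C D E F : Set V) : Prop :=
  A.Nonempty ∧ B.Nonempty ∧ Disjoint A B ∧
  Disjoint C D ∧ Disjoint C E ∧ Disjoint C F ∧
  Disjoint D E ∧ Disjoint D F ∧ Disjoint E F ∧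
  C ∪ D ∪ E ∪ F = (A ∪ B)ᶜ ∧
  T.SComplete A (C ∪ E) ∧ T.SAnticomplete A (D ∪ F) ∧
  T.SComplete B (D ∪ E) ∧ T.SAnticomplete B (C ∪ F) ∧
  ¬ T.SComplete A B ∧ ¬ T.SAnticomplete A B ∧
  3 ≤ (A ∪ B).ncard ∧ 3 ≤ (C ∪ D ∪ E ∪ F).ncard

/-- `(A,B)` is a homogeneous pair. -/
def HomPair (T : Trigraph V) (A B : Set V) : Prop := ∃ C D E F, T.IsSplit A B C D E F

/-- A small homogeneous pair. -/
def SmallHomPair (T : Trigraph V) (A B : Set V) : Prop :=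
  T.HomPair A B ∧ (A ∪ B).ncard ≤ 6

/-- A proper homogeneous pair. -/
def ProperHomPair (T : Trigraph V) (A B : Set V) : Prop :=
  ∃ C D E F, T.IsSplit A B C D E F ∧ C.Nonempty ∧ D.Nonempty

/-- `(X, Xᶜ)` is a decomposition of `T`. -/
def Decomp (T : Trigraph V) (X : Set V) : Prop :=
  T.HomSet X ∨ ∃ A B, X = A ∪ B ∧ (T.SmallHomPair A B ∨ T.ProperHomPair A B)

/-- `(X, Xᶜ)` is a homogeneous cut of `T`. -/
def HomCut (T : Trigraph V) (X : Set V) : Prop :=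
  T.HomSet X ∨ ∃ A B, X = A ∪ B ∧ T.ProperHomPair A B

/-- A minimally-sided homogeneous cut. -/
def MinSidedHomCut (T : Trigraph V) (X : Set V) : Prop :=
  T.HomCut X ∧ ∀ X' : Set V, T.HomCut X' → ¬ X' ⊂ X

/-- The induced subtrigraph on `X`. -/
def induce (T : Trigraph V) (X : Set V) : Trigraph X where
  θ := fun u v => T.θ u v
  symm := fun u v => T.symm u v
  range := fun u v h => T.range u v (fun hh => h (Subtype.ext hh))

open Classical in
/-- The trigraph obtained from `T[X]` by adding two marker vertices joined by a switchable
pair, the first strongly complete to (the trace in `X` of) `P` and strongly anticomplete to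
the rest of `X`, the second strongly complete to `Q` and strongly anticomplete to the rest. -/
noncomputable def augment2 (T : Trigraph V) (X P Q : Set V) : Trigraph (↥X ⊕ Fin 2) where
  θ := fun u v =>
    match u, v with
    | Sum.inl u, Sum.inl v => T.θ u v
    | Sum.inl u, Sum.inr i => if (i = 0 ∧ (u : V) ∈ P) ∨ (i = 1 ∧ (u : V) ∈ Q) then 1 else -1
    | Sum.inr i, Sum.inl u => if (i = 0 ∧ (u : V) ∈ P) ∨ (i = 1 ∧ (u : V) ∈ Q) then 1 else -1
    | Sum.inr _, Sum.inr _ => 0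
  symm := by
    rintro (u | i) (v | j)
    · exact T.symm u v
    · rfl
    · rfl
    · rfl
  range := by
    rintro (u | i) (v | j) h
    · exact T.range u v fun hh => h (by rw [Subtype.ext hh])
    · dsimp only; split <;> simp
    · dsimp only; split <;> simp
    · simp

/-- The block of decomposition `T_X` for a proper homogeneous pair `(A,B)`:
`T[A ∪ B]` together with marker vertices `c` (strongly complete to `A`) and `d`
(strongly complete to `B`), with `cd` a switchable pair. -/
noncomputable def blockXPair (T : Trigraph V) (A B : Set V) : Trigraph (↥(A ∪ B) ⊕ Fin 2) :=
  T.augment2 (A ∪ B) A B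

/-- The block of decomposition `T_Y` for a homogeneous pair `(A,B)` with split
`(A,B,C,D,E,F)` : `T[Y]` (where `Y = (A ∪ B)ᶜ`) together with marker vertices `a`
(strongly complete to `C ∪ E`) and `b` (strongly complete to `D ∪ E`), with `ab` a
switchable pair. -/
noncomputable def blockYPair (T : Trigraph V) (A B C D E : Set V) : Trigraph (↥(A ∪ B)ᶜ ⊕ Fin 2) :=
  T.augment2 (A ∪ B)ᶜ (C ∪ E) (D ∪ E)

/-- A strong clique: vertices pairwise strongly adjacent. -/
def StrongClique (T : Trigraph V) (K : Set V) : Prop := K.Pairwise T.SEdge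

/-- A strong stable set: vertices pairwise strongly antiadjacent. -/
def StrongStable (T : Trigraph V) (K : Set V) : Prop := K.Pairwise T.SAnti

/-- `T[X]` is triangle-free. -/
def TriangleFreeOn (T : Trigraph V) (X : Set V) : Prop :=
  ∀ x ∈ X, ∀ y ∈ X, ∀ z ∈ X, ¬ (T.Adj x y ∧ T.Adj x z ∧ T.Adj y z)

/-- Membership in the basic class `𝒯₁`. -/
def InT1 (T : Trigraph V) : Prop :=
  T.Monogamous ∧ ∃ (X : Set V) (t : ℕ) (K : Fin t → Set V),
    (X ∪ ⋃ i, K i) = Set.univ ∧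
    (∀ i, Disjoint X (K i)) ∧ (∀ i j, i ≠ j → Disjoint (K i) (K j)) ∧
    T.TriangleFreeOn X ∧ (∀ i, T.StrongClique (K i)) ∧
    (∀ i j, i ≠ j → T.SAnticomplete (K i) (K j)) ∧
    (∀ i, ∀ v ∈ K i, ∃ A B : Set V,
      A ∪ B = {x ∈ X | T.Adj v x} ∧ Disjoint A B ∧
      T.StrongStable A ∧ T.StrongStable B ∧ T.SComplete A B)

/-- Membership in the basic class `𝒯₀`: monogamous trigraphs on at most 8 vertices. -/
def InT0 (T : Trigraph V) : Prop := T.Monogamous ∧ Nat.card V ≤ 8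

/-- A basic trigraph: a member of `𝒯₀ ∪ 𝒯₁ ∪ 𝒯₁bar`. -/
def Basic (T : Trigraph V) : Prop := T.InT0 ∨ T.InT1 ∨ T.compl.InT1

/-- `h` lists the vertices of a hole of length `k` in `T`. -/
def IsHole (T : Trigraph V) (k : ℕ) (h : Fin k → V) : Prop :=
  4 ≤ k ∧ Function.Injective h ∧ ∀ i j : Fin k,
    (((i.val + 1) % k = j.val ∨ (j.val + 1) % k = i.val) → T.Adj (h i) (h j)) ∧
    (i ≠ j → ¬ ((i.val + 1) % k = j.val ∨ (j.val + 1) % k = i.val) → T.Anti (h i) (h j))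

def HasOddHole (T : Trigraph V) : Prop := ∃ k, Odd k ∧ ∃ h : Fin k → V, T.IsHole k h

/-- A Berge trigraph: no odd hole and no odd antihole. -/
def Berge (T : Trigraph V) : Prop := ¬ T.HasOddHole ∧ ¬ T.compl.HasOddHole

/-- `(wv, we)` are legitimate weights for the trigraph `T`: `we` is symmetric and for every
switchable pair `uv` we have `max (wv u) (wv v) ≤ we u v ≤ wv u + wv v`. -/
def GoodWeights (T : Trigraph V) (wv : V → ℕ) (we : V → V → ℕ) : Prop :=
  (∀ u v, we u v = we v u) ∧
  ∀ u v, T.Switch u v → max (wv u) (wv v) ≤ we u v ∧ we u v ≤ wv u + wv v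

/-- `S` is a stable set of `T`. -/
def StableF (T : Trigraph V) (S : Finset V) : Prop :=
  ∀ u ∈ S, ∀ v ∈ S, u ≠ v → T.Anti u v

open Classical in
/-- The weight of a stable set `S`: the sum of the weights of the vertices of `S` that are
strongly antiadjacent to every other vertex of `S`, plus the sum of the weights of the
switchable pairs with both ends in `S`. -/
noncomputable def weightF (T : Trigraph V) (wv : V → ℕ) (we : V → V → ℕ) (S : Finset V) : ℕ :=
  (∑ v ∈ S.filter (fun v => ∀ u ∈ S, u ≠ v → T.SAnti u v), wv v)
    + (∑ u ∈ S, ∑ v ∈ S, if T.Switch u v then we u v else 0) / 2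

open Classical in
/-- The maximum weight of a stable set of `T` contained in `X`. -/
noncomputable def alphaOn [Fintype V] (T : Trigraph V) (wv : V → ℕ) (we : V → V → ℕ)
    (X : Set V) : ℕ :=
  (Finset.univ.powerset.filter fun S : Finset V => ↑S ⊆ X ∧ T.StableF S).sup (T.weightF wv we)

/-- The maximum weight of a stable set of `T`. -/
noncomputable def alphaW [Fintype V] (T : Trigraph V) (wv : V → ℕ) (we : V → V → ℕ) : ℕ :=
  T.alphaOn wv we Set.univ

open Classical in
/-- The trigraph `T_{a → S}` obtained from `T` by turning the switchable pair `ab` into a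
strong edge and adding a new vertex `a' = none` strongly complete to `N(a) ∖ {b}` and
strongly anticomplete to everything else (including `a`). -/
noncomputable def expandS (T : Trigraph V) (a b : V) : Trigraph (Option V) where
  θ := fun u v =>
    match u, v with
    | some u, some v => if (u = a ∧ v = b) ∨ (u = b ∧ v = a) then 1 else T.θ u v
    | some u, none => if T.Adj a u ∧ u ≠ b then 1 else -1
    | none, some v => if T.Adj a v ∧ v ≠ b then 1 else -1
    | none, none => -1
  symm := by
    rintro (_ | u) (_ | v)
    · rfl
    · rfl
    · rfl
    · dsimp only
      have hiff : ((u = a ∧ v = b) ∨ (u = b ∧ v = a)) ↔ ((v = a ∧ u = b) ∨ (v = b ∧ u = a)) := by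
        tauto
      rw [if_congr hiff rfl (T.symm u v)]
  range := by
    rintro (_ | u) (_ | v) h
    · exact absurd rfl h
    · dsimp only; split <;> simp
    · dsimp only; split <;> simp
    · dsimp only
      split
      · simp
      · exact T.range u v fun hh => h (by rw [hh])

open Classical in
/-- The trigraph `T_{a → K}`, defined like `T_{a → S}` except that the new vertex `a'` is in
addition strongly adjacent to `a`. -/
noncomputable def expandK (T : Trigraph V) (a b : V) : Trigraph (Option V) where
  θ := fun u v =>
    match u, v with
    | some u, some v => if (u = a ∧ v = b) ∨ (u = b ∧ v = a) then 1 else T.θ u v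
    | some u, none => if (T.Adj a u ∧ u ≠ b) ∨ u = a then 1 else -1
    | none, some v => if (T.Adj a v ∧ v ≠ b) ∨ v = a then 1 else -1
    | none, none => -1
  symm := by
    rintro (_ | u) (_ | v)
    · rfl
    · rfl
    · rfl
    · dsimp only
      have hiff : ((u = a ∧ v = b) ∨ (u = b ∧ v = a)) ↔ ((v = a ∧ u = b) ∨ (v = b ∧ u = a)) := by
        tauto
      rw [if_congr hiff rfl (T.symm u v)]
  range := by
    rintro (_ | u) (_ | v) h
    · exact absurd rfl h
    · dsimp only; split <;> simp
    · dsimp only; split <;> simp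
    · dsimp only
      split
      · simp
      · exact T.range u v fun hh => h (by rw [hh])

/-- Vertex weights for `T_{a → S}`. -/
def wvS (wv : V → ℕ) (we : V → V → ℕ) (a b : V) [DecidableEq V] : Option V → ℕ
  | some v => if v = a then wv a + wv b - we a b else wv v
  | none => we a b - wv b

/-- Vertex weights for `T_{a → K}`. -/
def wvK (wv : V → ℕ) (we : V → V → ℕ) (a b : V) : Option V → ℕ
  | some v => wv v
  | none => we a b - wv b

/-- Switchable-pair weights for `T_{a → S}` and `T_{a → K}`. -/
def weO (we : V → V → ℕ) : Option V → Option V → ℕ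
  | some u, some v => we u v
  | _, _ => 0

end Trigraph

namespace Trigraph

variable {V W : Type*} {T : Trigraph V}

lemma Adj.symm {u v : V} (h : T.Adj u v) : T.Adj v u :=
  ⟨h.1.symm, by rw [T.symm v u]; exact h.2⟩

lemma Anti.symm {u v : V} (h : T.Anti u v) : T.Anti v u :=
  ⟨h.1.symm, by rw [T.symm v u]; exact h.2⟩

lemma Switch.symm {u v : V} (h : T.Switch u v) : T.Switch v u :=
  ⟨h.1.symm, by rw [T.symm v u]; exact h.2⟩

lemma SEdge.symm {u v : V} (h : T.SEdge u v) : T.SEdge v u :=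
  ⟨h.1.symm, by rw [T.symm v u]; exact h.2⟩

lemma SAnti.symm {u v : V} (h : T.SAnti u v) : T.SAnti v u :=
  ⟨h.1.symm, by rw [T.symm v u]; exact h.2⟩

def AdjAs (T : Trigraph V) (b : Bool) (u v : V) : Prop := bif b then T.Adj u v else T.Anti u v

section AdjAs

variable {b : Bool} {u v : V}

lemma AdjAs.ne (h : T.AdjAs b u v) : u ≠ v := by
  cases b <;> exact h.1

lemma AdjAs.symm (h : T.AdjAs b u v) : T.AdjAs b v u := by
  cases b
  exacts [Anti.symm h, Adj.symm h]

lemma AdjAs.of_θ_eq {S : Trigraph W} {u' v' : W} (h : T.AdjAs b u v) (hne : u ≠ v → u' ≠ v')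
    (hθ : S.θ u' v' = T.θ u v) : S.AdjAs b u' v' := by
  cases b <;> exact ⟨hne h.1, hθ ▸ h.2⟩

end AdjAs

-- The adjacency matrix of the bull, with the vertices in the order `x1, x2, x3, y, z`.
def bullAdj : Fin 5 → Fin 5 → Bool :=
  ![![false, true, true, true, false],
    ![true, false, true, false, true],
    ![true, true, false, false, false],
    ![true, false, false, false, false],
    ![false, true, false, false, false]]

lemma bullAdj_comm : ∀ i j, bullAdj i j = bullAdj j i := by decide

lemma bullAdj_exists_eq_of_ne :
    ∀ i j, i ≠ j → ∃ k, k ≠ i ∧ k ≠ j ∧ bullAdj i k = bullAdj j k := by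
  decide

def IsBullOn (T : Trigraph V) (v : Fin 5 → V) : Prop :=
  ∀ i j, i ≠ j → T.AdjAs (bullAdj i j) (v i) (v j)

lemma IsBullOn.injective {v : Fin 5 → V} (h : T.IsBullOn v) : Function.Injective v :=
  fun i j hij => by_contra fun hne => (h i j hne).ne hij

lemma isBull_iff_isBullOn {x1 x2 x3 y z : V} :
    T.IsBull x1 x2 x3 y z ↔ T.IsBullOn ![x1, x2, x3, y, z] := by
  constructor
  · rintro ⟨h1, h2, h3, h4, h5, h6, h7, h8, h9, h10⟩ i j hij
    fin_cases i <;> fin_cases j <;> first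
      | exact absurd rfl hij
      | assumption
      | exact Adj.symm ‹_›
      | exact Anti.symm ‹_›
  · intro h
    exact ⟨h 0 1 (by decide), h 0 2 (by decide), h 1 2 (by decide), h 3 0 (by decide),
      h 3 1 (by decide), h 3 2 (by decide), h 3 4 (by decide), h 4 1 (by decide),
      h 4 0 (by decide), h 4 2 (by decide)⟩

lemma bullFree_iff : T.BullFree ↔ ∀ v, ¬ T.IsBullOn v := by
  refine ⟨fun h v hv => h (v 0) (v 1) (v 2) (v 3) (v 4) (isBull_iff_isBullOn.2 ?_),
    fun h x1 x2 x3 y z hb => h _ (isBull_iff_isBullOn.1 hb)⟩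
  convert hv
  ext i
  fin_cases i <;> rfl

lemma BullFree.induce (hbf : T.BullFree) (X : Set V) : (T.induce X).BullFree := by
  rw [bullFree_iff] at hbf ⊢
  exact fun v hv => hbf (Subtype.val ∘ v) fun i j hij =>
    (hv i j hij).of_θ_eq Subtype.coe_ne_coe.mpr rfl

lemma Monogamous.induce (hm : T.Monogamous) (X : Set V) : (T.induce X).Monogamous :=
  fun v u w h1 h2 => Subtype.ext <|
    hm v u w ⟨Subtype.coe_ne_coe.mpr h1.1, h1.2⟩ ⟨Subtype.coe_ne_coe.mpr h2.1, h2.2⟩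

open Classical in
def Mimics (T : Trigraph V) (X S : Set V) (w : V) : Prop :=
  w ∉ X ∧ ∀ u ∈ X, T.θ w u = if u ∈ S then 1 else -1

lemma mimics_of_forall {X S S' : Set V} {w : V} (hw : w ∉ X) (hX : X ⊆ S ∪ S')
    (hS : ∀ u ∈ S, T.SEdge w u) (hS' : ∀ u ∈ S', T.SAnti w u) : T.Mimics X S w :=
  ⟨hw, fun u hu => by
    split_ifs with h
    exacts [(hS u h).2, (hS' u ((hX hu).resolve_left h)).2]⟩

section augment2

variable {X P Q : Set V} {p q : V}

open Classical in
lemma augment2_θ_inl_inr (u : X) (i : Fin 2) :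
    (T.augment2 X P Q).θ (.inl u) (.inr i) = if (u : V) ∈ ![P, Q] i then 1 else -1 := by
  fin_cases i <;> simp only [augment2] <;> congr 1 <;> simp

lemma augment2_not_switch_inl_inr (u : X) (i : Fin 2) :
    ¬ (T.augment2 X P Q).Switch (.inl u) (.inr i) := by
  rintro ⟨-, h⟩
  rw [augment2_θ_inl_inr] at h
  split_ifs at h
  exact one_ne_zero h

lemma augment2_monogamous (hm : T.Monogamous) : (T.augment2 X P Q).Monogamous := by
  rintro (v | i) (u | j) (w | k) h1 h2
  · exact congrArg Sum.inl <| Subtype.ext <| hm v u w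
      ⟨fun e => h1.1 (congrArg Sum.inl (Subtype.ext e)), h1.2⟩
      ⟨fun e => h2.1 (congrArg Sum.inl (Subtype.ext e)), h2.2⟩
  all_goals try first
    | exact (augment2_not_switch_inl_inr _ _ h1).elim
    | exact (augment2_not_switch_inl_inr _ _ h2).elim
    | exact (augment2_not_switch_inl_inr _ _ (Switch.symm h1)).elim
    | exact (augment2_not_switch_inl_inr _ _ (Switch.symm h2)).elim
  have hij : i ≠ j := fun e => h1.1 (congrArg Sum.inr e)
  have hik : i ≠ k := fun e => h2.1 (congrArg Sum.inr e)
  exact congrArg Sum.inr (by omega)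

lemma mimics_fin_two (hp : T.Mimics X P p) (hq : T.Mimics X Q q) (i : Fin 2) :
    T.Mimics X (![P, Q] i) (![p, q] i) := by
  fin_cases i
  exacts [hp, hq]

lemma AdjAs.of_augment2_inl_inr {b : Bool} {u : X} {i : Fin 2} {w : V}
    (h : (T.augment2 X P Q).AdjAs b (.inl u) (.inr i)) (hw : T.Mimics X (![P, Q] i) w) :
    T.AdjAs b u w :=
  h.of_θ_eq (fun _ e => hw.1 (e ▸ u.2)) (by rw [T.symm, hw.2 u u.2, augment2_θ_inl_inr])

lemma augment2_adjAs_inl_inr_iff {b : Bool} {u : X} {i : Fin 2} :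
    (T.augment2 X P Q).AdjAs b (.inl u) (.inr i) ↔ (b = true ↔ (u : V) ∈ ![P, Q] i) := by
  cases b <;> simp [AdjAs, Adj, Anti, augment2_θ_inl_inr] <;> split_ifs <;> simp_all

lemma IsBullOn.of_augment2 {v : Fin 5 → X ⊕ Fin 2} (hv : (T.augment2 X P Q).IsBullOn v)
    (hp : T.Mimics X P p) (hq : T.Mimics X Q q)
    (hmark : ∀ i j, v i = .inr 0 → v j = .inr 1 → T.AdjAs (bullAdj i j) p q) :
    T.IsBullOn (Sum.elim Subtype.val ![p, q] ∘ v) := by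
  intro i j hij
  have hvij := hv i j hij
  simp only [Function.comp_apply]
  rcases hvi : v i with u | k <;> rcases hvj : v j with w | l <;> rw [hvi, hvj] at hvij <;>
    simp only [Sum.elim_inl, Sum.elim_inr]
  · exact hvij.of_θ_eq (fun h e => h (congrArg Sum.inl (Subtype.ext e))) rfl
  · exact hvij.of_augment2_inl_inr (mimics_fin_two hp hq l)
  · rw [bullAdj_comm] at hvij ⊢
    exact (hvij.symm.of_augment2_inl_inr (mimics_fin_two hp hq k)).symm
  · fin_cases k <;> fin_cases l
    · exact absurd (hvi.trans hvj.symm) (hv.injective.ne hij)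
    · exact hmark i j hvi hvj
    · rw [bullAdj_comm]
      exact (hmark j i hvj hvi).symm
    · exact absurd (hvi.trans hvj.symm) (hv.injective.ne hij)

lemma augment2_bullFree_of_forall_adjAs (hbf : T.BullFree)
    (hmimic : ∀ b, ∃ p q, T.Mimics X P p ∧ T.Mimics X Q q ∧ T.AdjAs b p q) :
    (T.augment2 X P Q).BullFree := by
  rw [bullFree_iff] at hbf ⊢
  intro v hv
  by_cases hmark : ∃ i j, v i = .inr 0 ∧ v j = .inr 1
  · obtain ⟨i, j, hi, hj⟩ := hmark
    obtain ⟨p, q, hp, hq, hpq⟩ := hmimic (bullAdj i j)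
    refine hbf _ (hv.of_augment2 hp hq fun i' j' hi' hj' => ?_)
    rwa [hv.injective (hi'.trans hi.symm), hv.injective (hj'.trans hj.symm)]
  · obtain ⟨p, q, hp, hq, -⟩ := hmimic true
    exact hbf _ (hv.of_augment2 hp hq fun i j hi hj => absurd ⟨i, j, hi, hj⟩ hmark)

lemma augment2_bullFree_of_compl (hbf : T.BullFree) (hPQ : ∀ u ∈ X, u ∈ P ↔ u ∉ Q)
    (hp : T.Mimics X P p) (hq : T.Mimics X Q q) : (T.augment2 X P Q).BullFree := by
  rw [bullFree_iff] at hbf ⊢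
  refine fun v hv => hbf _ (hv.of_augment2 hp hq fun i j hi hj => ?_)
  have hij : i ≠ j := fun e => by simp [e, hj] at hi
  obtain ⟨k, hki, hkj, hk⟩ := bullAdj_exists_eq_of_ne i j hij
  rcases hvk : v k with u | l
  · have hu0 := hv k i hki
    have hu1 := hv k j hkj
    rw [hvk, hi, augment2_adjAs_inl_inr_iff, bullAdj_comm, hk] at hu0
    rw [hvk, hj, augment2_adjAs_inl_inr_iff, bullAdj_comm] at hu1
    simp only [Matrix.cons_val_zero, Matrix.cons_val_one] at hu0 hu1
    have := hPQ u u.2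
    tauto
  · fin_cases l
    exacts [absurd (hv.injective (hvk.trans hi.symm)) hki,
      absurd (hv.injective (hvk.trans hj.symm)) hkj]

end augment2

section IsSplit

variable {A B C D E F : Set V}

lemma IsSplit.mimics_of_mem_left (hs : T.IsSplit A B C D E F) {a : V} (ha : a ∈ A) :
    T.Mimics (A ∪ B)ᶜ (C ∪ E) a := by
  obtain ⟨-, -, -, -, -, -, -, -, -, hunion, hACE, hADF, -⟩ := hs
  refine mimics_of_forall (fun h => h (Or.inl ha)) (fun u hu => ?_) (hACE a ha) (hADF a ha)
  rw [← hunion] at hu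
  simp only [Set.mem_union] at hu ⊢
  tauto

lemma IsSplit.mimics_of_mem_right (hs : T.IsSplit A B C D E F) {b : V} (hb : b ∈ B) :
    T.Mimics (A ∪ B)ᶜ (D ∪ E) b := by
  obtain ⟨-, -, -, -, -, -, -, -, -, hunion, -, -, hBDE, hBCF, -⟩ := hs
  refine mimics_of_forall (fun h => h (Or.inr hb)) (fun u hu => ?_) (hBDE b hb) (hBCF b hb)
  rw [← hunion] at hu
  simp only [Set.mem_union] at hu ⊢
  tauto

lemma IsSplit.mimics_of_mem_C (hs : T.IsSplit A B C D E F) {c : V} (hc : c ∈ C) :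
    T.Mimics (A ∪ B) A c := by
  obtain ⟨-, -, -, -, -, -, -, -, -, hunion, hACE, -, -, hBCF, -⟩ := hs
  have hcAB : c ∈ (A ∪ B)ᶜ := hunion ▸ Or.inl (Or.inl (Or.inl hc))
  exact mimics_of_forall hcAB le_rfl (fun a ha => (hACE a ha c (Or.inl hc)).symm)
    (fun b hb => (hBCF b hb c (Or.inl hc)).symm)

lemma IsSplit.mimics_of_mem_D (hs : T.IsSplit A B C D E F) {d : V} (hd : d ∈ D) :
    T.Mimics (A ∪ B) B d := by
  obtain ⟨-, -, -, -, -, -, -, -, -, hunion, -, hADF, hBDE, -⟩ := hs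
  have hdAB : d ∈ (A ∪ B)ᶜ := hunion ▸ Or.inl (Or.inl (Or.inr hd))
  exact mimics_of_forall hdAB (Set.union_comm A B).le (fun b hb => (hBDE b hb d (Or.inl hd)).symm)
    (fun a ha => (hADF a ha d (Or.inl hd)).symm)

lemma IsSplit.exists_adjAs (hs : T.IsSplit A B C D E F) (b : Bool) :
    ∃ a ∈ A, ∃ a' ∈ B, T.AdjAs b a a' := by
  obtain ⟨-, -, hAB, -, -, -, -, -, -, -, -, -, -, -, hnc, hna, -⟩ := hs
  simp only [SComplete, SAnticomplete, SEdge, SAnti, not_forall] at hnc hna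
  cases b
  · obtain ⟨a, ha, a', ha', h⟩ := hnc
    have hne := hAB.ne_of_mem ha ha'
    have := T.range a a' hne
    exact ⟨a, ha, a', ha', hne, by tauto⟩
  · obtain ⟨a, ha, a', ha', h⟩ := hna
    have hne := hAB.ne_of_mem ha ha'
    have := T.range a a' hne
    exact ⟨a, ha, a', ha', hne, by tauto⟩

lemma IsSplit.blockYPair_bullFree (hs : T.IsSplit A B C D E F) (hbf : T.BullFree) :
    (T.blockYPair A B C D E).BullFree :=
  augment2_bullFree_of_forall_adjAs hbf fun b => by
    obtain ⟨a, ha, a', ha', h⟩ := hs.exists_adjAs b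
    exact ⟨a, a', hs.mimics_of_mem_left ha, hs.mimics_of_mem_right ha', h⟩

lemma IsSplit.blockXPair_bullFree (hs : T.IsSplit A B C D E F) (hbf : T.BullFree)
    (hC : C.Nonempty) (hD : D.Nonempty) : (T.blockXPair A B).BullFree := by
  obtain ⟨c, hc⟩ := hC
  obtain ⟨d, hd⟩ := hD
  refine augment2_bullFree_of_compl hbf (fun u hu => ⟨fun ha hb => ?_, hu.resolve_right⟩)
    (hs.mimics_of_mem_C hc) (hs.mimics_of_mem_D hd)
  exact hs.2.2.1.ne_of_mem ha hb rfl

end IsSplit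

end Trigraph

open Trigraph in
theorem blocks_bullfree_monogamous_general {V : Type} (T : Trigraph V)
    (hbf : T.BullFree) (hmono : T.Monogamous) :
    (∀ X : Set V, T.HomSet X →
      (T.induce X).BullFree ∧ (T.induce X).Monogamous ∧
      ∀ x ∈ X, (T.induce (Xᶜ ∪ {x})).BullFree ∧ (T.induce (Xᶜ ∪ {x})).Monogamous) ∧
    (∀ A B C D E F : Set V, T.IsSplit A B C D E F → (A ∪ B).ncard ≤ 6 →
      (T.induce (A ∪ B)).BullFree ∧ (T.induce (A ∪ B)).Monogamous ∧
      (T.blockYPair A B C D E).BullFree ∧ (T.blockYPair A B C D E).Monogamous) ∧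
    (∀ A B C D E F : Set V, T.IsSplit A B C D E F → C.Nonempty → D.Nonempty →
      (T.blockXPair A B).BullFree ∧ (T.blockXPair A B).Monogamous ∧
      (T.blockYPair A B C D E).BullFree ∧ (T.blockYPair A B C D E).Monogamous) :=
  ⟨fun X _ => ⟨hbf.induce X, hmono.induce X, fun _ _ => ⟨hbf.induce _, hmono.induce _⟩⟩,
    fun _ _ _ _ _ _ hs _ => ⟨hbf.induce _, hmono.induce _, hs.blockYPair_bullFree hbf,
      augment2_monogamous hmono⟩,
    fun _ _ _ _ _ _ hs hC hD => ⟨hs.blockXPair_bullFree hbf hC hD, augment2_monogamous hmono,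
      hs.blockYPair_bullFree hbf, augment2_monogamous hmono⟩⟩

open Trigraph in
/-- If `(X, Y)` is a decomposition of a bull-free monogamous trigraph `T`, then the
corresponding blocks `T_X` and `T_Y` are bull-free monogamous trigraphs.  The three kinds
of decompositions (homogeneous set, small homogeneous pair, proper homogeneous pair) are
treated separately, together with the corresponding blocks. -/
theorem blocks_bullfree_monogamous {V : Type} [Fintype V] [DecidableEq V] (T : Trigraph V)
    (hbf : T.BullFree) (hmono : T.Monogamous) :
    (∀ X : Set V, T.HomSet X →
      (T.induce X).BullFree ∧ (T.induce X).Monogamous ∧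
      ∀ x ∈ X, (T.induce (Xᶜ ∪ {x})).BullFree ∧ (T.induce (Xᶜ ∪ {x})).Monogamous) ∧
    (∀ A B C D E F : Set V, T.IsSplit A B C D E F → (A ∪ B).ncard ≤ 6 →
      (T.induce (A ∪ B)).BullFree ∧ (T.induce (A ∪ B)).Monogamous ∧
      (T.blockYPair A B C D E).BullFree ∧ (T.blockYPair A B C D E).Monogamous) ∧
    (∀ A B C D E F : Set V, T.IsSplit A B C D E F → C.Nonempty → D.Nonempty →
      (T.blockXPair A B).BullFree ∧ (T.blockXPair A B).Monogamous ∧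
      (T.blockYPair A B C D E).BullFree ∧ (T.blockYPair A B C D E).Monogamous) :=
  blocks_bullfree_monogamous_general T hbf hmono
end
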